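/- arXiv:2210.06171 — 4 statements merged into one kernel-verified Lean document; each statement's English description precedes it below -/
import Mathlib

section
/- Let n ≥ 1, let U be an orthogonal real n×n matrix, let D be a diagonal real n×n matrix with strictly positive diagonal entries, set H = U D Uᵀ, and let C be a symmetric positive semidefinite real n×n matrix. Let J ⊆ ℝ be an interval and A : J → M_n(ℝ) a matrix-valued function such that for every t ∈ J the spectral norm satisfies ‖A(t)‖ < 1 and A has derivative at t equal to A'(t) = −H · A(t) · S(t) · H², where S(t) = Σ_{n=0}^∞ A(t)ⁿ C (A(t)ⁿ)ᵀ. Then the function t ↦ ‖Uᵀ A(t) U D⁻¹‖_F² is nonincreasing on J, where ‖·‖_F denotes the Frobenius norm. -/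
open Matrix

/-- The spectral norm (ℓ²-operator norm) of a real square matrix. -/
noncomputable def specNorm {n : ℕ} (A : Matrix (Fin n) (Fin n) ℝ) : ℝ :=
  ‖Matrix.toEuclideanCLM (𝕜 := ℝ) A‖

attribute [local instance]
  Matrix.frobeniusSeminormedAddCommGroup
  Matrix.frobeniusNormedAddCommGroup
  Matrix.frobeniusNormedSpace


/-!
In the eigenbasis of `H` put `B = Uᵀ A U` and `Q = Uᵀ S U`, so that the rescaled error is
`X = B D⁻¹`. Since `Uᵀ H = D Uᵀ`, the flow gives `X' = -D B Q D`, hence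
`d/dt tr (Xᵀ X) = 2 tr (Xᵀ X') = -2 tr ((Bᵀ D B) Q)`. Both `Bᵀ D B` and `Q` are positive
semidefinite (`S` is a sum of congruences of `C`), and the trace of a product of two positive
semidefinite matrices is nonnegative.
-/

attribute [local instance] Matrix.frobeniusNormedRing Matrix.frobeniusNormedAlgebra

namespace Matrix

section PosSemidef

variable {𝕜 ι m : Type*} [RCLike 𝕜] [Fintype m]
open scoped ComplexOrder

theorem PosSemidef.tsum {f : ι → Matrix m m 𝕜} (hf : ∀ i, (f i).PosSemidef) :
    (∑' i, f i).PosSemidef := by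
  by_cases hs : Summable f
  swap
  · simpa [tsum_eq_zero_of_not_summable hs] using PosSemidef.zero
  refine posSemidef_iff_dotProduct_mulVec.mpr ⟨?_, fun x => ?_⟩
  · simp only [IsHermitian, conjTranspose_tsum, (hf _).isHermitian.eq]
  · let q : Matrix m m 𝕜 →+ 𝕜 :=
      { toFun := fun M => star x ⬝ᵥ M *ᵥ x
        map_zero' := by simp
        map_add' := fun M N => by simp [add_mulVec, dotProduct_add] }
    have hq : Continuous q :=
      continuous_const.dotProduct (continuous_id.matrix_mulVec continuous_const)
    exact (hs.hasSum.map q hq).nonneg fun i => (hf i).dotProduct_mulVec_nonneg x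

open scoped MatrixOrder Matrix.Norms.L2Operator in
theorem PosSemidef.trace_mul_nonneg {P Q : Matrix m m 𝕜} (hP : P.PosSemidef)
    (hQ : Q.PosSemidef) : 0 ≤ (P * Q).trace := by
  classical
  obtain ⟨E, rfl⟩ := CStarAlgebra.nonneg_iff_eq_star_mul_self.mp hP.nonneg
  rw [star_eq_conjTranspose, Matrix.mul_assoc, trace_mul_comm, Matrix.mul_assoc,
    ← Matrix.mul_assoc]
  exact (hQ.mul_mul_conjTranspose_same E).trace_nonneg

end PosSemidef

variable {m : Type*} [Fintype m] [DecidableEq m]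

theorem PosSemidef.tsum_pow_mul_mul_transpose_pow {C : Matrix m m ℝ} (hC : C.PosSemidef)
    (A : Matrix m m ℝ) : (∑' k : ℕ, A ^ k * C * (A ^ k)ᵀ).PosSemidef :=
  PosSemidef.tsum fun k => by
    simpa only [conjTranspose_eq_transpose_of_trivial] using hC.mul_mul_conjTranspose_same (A ^ k)

theorem _root_.HasDerivAt.trace_transpose_mul_self {M : ℝ → Matrix m m ℝ} {M' : Matrix m m ℝ}
    {t : ℝ} (h : HasDerivAt M M' t) :
    HasDerivAt (fun s => ((M s)ᵀ * M s).trace) (2 * ((M t)ᵀ * M').trace) t := by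
  have hT : HasDerivAt (fun s => (M s)ᵀ) M'ᵀ t :=
    (transposeLinearEquiv m m ℝ ℝ).toLinearMap.toContinuousLinearMap.hasFDerivAt.comp_hasDerivAt
      t h
  have hP : HasDerivAt (fun s => ((M s)ᵀ * M s).trace) (M'ᵀ * M t + (M t)ᵀ * M').trace t :=
    (traceLinearMap m ℝ ℝ).toContinuousLinearMap.hasFDerivAt.comp_hasDerivAt t (hT.mul h)
  rwa [trace_add, ← trace_transpose (M'ᵀ * M t), transpose_mul, transpose_transpose,
    ← two_mul] at hP

end Matrix

section Flow

variable {m : Type*} [Fintype m] [DecidableEq m] {U D H : Matrix m m ℝ}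

theorem orthogonal_conj_flow_mul_inv_eq (hU : U * Uᵀ = 1) (hD : IsUnit D)
    (hH : H = U * D * Uᵀ) (A S : Matrix m m ℝ) :
    Uᵀ * (H * A * S * H ^ 2) * U * D⁻¹ = D * (Uᵀ * A * U) * (Uᵀ * S * U) * D := by
  have hDD : D * D⁻¹ = 1 := mul_nonsing_inv D ((isUnit_iff_isUnit_det D).mp hD)
  have hUU : ∀ X, Uᵀ * (U * X) = X := fun X => by
    rw [← Matrix.mul_assoc, mul_eq_one_comm.mp hU, Matrix.one_mul]
  have hUU' : ∀ X, U * (Uᵀ * X) = X := fun X => by rw [← Matrix.mul_assoc, hU, Matrix.one_mul]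
  simp only [hH, pow_two, Matrix.mul_assoc, hUU, hUU', hDD, Matrix.mul_one]

theorem trace_rescaled_flow_nonpos (hU : U * Uᵀ = 1) (hD : D.PosDef) (hH : H = U * D * Uᵀ)
    (A : Matrix m m ℝ) {S : Matrix m m ℝ} (hS : S.PosSemidef) :
    ((Uᵀ * A * U * D⁻¹)ᵀ * (Uᵀ * -(H * A * S * H ^ 2) * U * D⁻¹)).trace ≤ 0 := by
  have hDD : D * D⁻¹ = 1 := mul_nonsing_inv D ((isUnit_iff_isUnit_det D).mp hD.isUnit)
  have hDt : Dᵀ = D := hD.isHermitian.eq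
  rw [Matrix.mul_neg, Matrix.neg_mul, Matrix.neg_mul,
    orthogonal_conj_flow_mul_inv_eq hU hD.isUnit hH, Matrix.mul_neg, trace_neg, neg_nonpos]
  set B := Uᵀ * A * U
  set Q := Uᵀ * S * U
  have hBDB : (Bᵀ * D * B).PosSemidef := by
    simpa only [conjTranspose_eq_transpose_of_trivial] using
      hD.posSemidef.conjTranspose_mul_mul_same B
  have hQ : Q.PosSemidef := by
    simpa only [conjTranspose_eq_transpose_of_trivial] using hS.conjTranspose_mul_mul_same U
  have hcyclic : ((B * D⁻¹)ᵀ * (D * B * Q * D)).trace = (Bᵀ * D * B * Q).trace := by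
    rw [transpose_mul, transpose_nonsing_inv, hDt, Matrix.mul_assoc,
      trace_mul_comm]
    simp only [Matrix.mul_assoc, hDD, Matrix.mul_one]
  rw [hcyclic]
  exact hBDB.trace_mul_nonneg hQ

end Flow

theorem lodo_flow_error_nonincreasing_general (n : ℕ)
    (U : Matrix (Fin n) (Fin n) ℝ) (hU : U * Uᵀ = 1)
    (d : Fin n → ℝ) (hd : ∀ i, 0 < d i)
    (D : Matrix (Fin n) (Fin n) ℝ) (hD : D = Matrix.diagonal d)
    (H : Matrix (Fin n) (Fin n) ℝ) (hH : H = U * D * Uᵀ)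
    (C : Matrix (Fin n) (Fin n) ℝ) (hC : C.PosSemidef)
    (J : Set ℝ) (hJ : J.OrdConnected)
    (A : ℝ → Matrix (Fin n) (Fin n) ℝ)
    (hAderiv : ∀ t ∈ J,
      HasDerivAt A
        (-(H * A t * (∑' k : ℕ, (A t) ^ k * C * ((A t) ^ k)ᵀ) * H ^ 2)) t) :
    AntitoneOn (fun t => ((Uᵀ * A t * U * D⁻¹)ᵀ * (Uᵀ * A t * U * D⁻¹)).trace) J := by
  have hDpos : D.PosDef := hD ▸ PosDef.diagonal hd
  set S := fun t => ∑' k : ℕ, (A t) ^ k * C * ((A t) ^ k)ᵀ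
  have hderiv : ∀ t ∈ J,
      HasDerivAt (fun t => ((Uᵀ * A t * U * D⁻¹)ᵀ * (Uᵀ * A t * U * D⁻¹)).trace)
        (2 * ((Uᵀ * A t * U * D⁻¹)ᵀ * (Uᵀ * -(H * A t * S t * H ^ 2) * U * D⁻¹)).trace) t :=
    fun t ht =>
      ((((hAderiv t ht).const_mul Uᵀ).mul_const U).mul_const D⁻¹).trace_transpose_mul_self
  refine antitoneOn_of_hasDerivWithinAt_nonpos (convex_iff_ordConnected.mpr hJ)
    (fun t ht => (hderiv t ht).continuousAt.continuousWithinAt)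
    (fun t ht => (hderiv t (interior_subset ht)).hasDerivWithinAt) fun t _ => ?_
  exact mul_nonpos_of_nonneg_of_nonpos zero_le_two
    (trace_rescaled_flow_nonpos hU hDpos hH _ (hC.tsum_pow_mul_mul_transpose_pow _))

/-- Along the continuous-time Hessian-learning flow
`dA/dt = −H A S(t) H²` with `S(t) = Σₙ A(t)ⁿ C (A(t)ⁿ)ᵀ`, for `H = U D Uᵀ` with `U`
orthogonal and `D` a positive diagonal matrix and `C` symmetric PSD, the rescaled squared
Frobenius error `‖Uᵀ A(t) U D⁻¹‖_F²` is nonincreasing on the interval `J`. -/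
theorem lodo_flow_error_nonincreasing (n : ℕ) (hn : 1 ≤ n)
    (U : Matrix (Fin n) (Fin n) ℝ) (hU : U * Uᵀ = 1)
    (d : Fin n → ℝ) (hd : ∀ i, 0 < d i)
    (D : Matrix (Fin n) (Fin n) ℝ) (hD : D = Matrix.diagonal d)
    (H : Matrix (Fin n) (Fin n) ℝ) (hH : H = U * D * Uᵀ)
    (C : Matrix (Fin n) (Fin n) ℝ) (hC : C.PosSemidef)
    (J : Set ℝ) (hJ : J.OrdConnected)
    (A : ℝ → Matrix (Fin n) (Fin n) ℝ)
    (hAnorm : ∀ t ∈ J, specNorm (A t) < 1)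
    (hAderiv : ∀ t ∈ J,
      HasDerivAt A
        (-(H * A t * (∑' k : ℕ, (A t) ^ k * C * ((A t) ^ k)ᵀ) * H ^ 2)) t) :
    AntitoneOn (fun t => ((Uᵀ * A t * U * D⁻¹)ᵀ * (Uᵀ * A t * U * D⁻¹)).trace) J :=
  lodo_flow_error_nonincreasing_general n U hU d hd D hD H hH C hC J hJ A hAderiv
end

section
/- Under the coupled-dynamics setup, for every Δt ∈ ℕ and every τ with t₀ ≤ τ ≤ t₀ + Δt + 1, the deviation satisfies ‖b_τ − b'_τ‖ ≤ ε_A(Δt) · Σ_{τ₁ = t₀}^{τ − 1} ‖A'_{t₀}‖^{τ − 1 − τ₁} · ‖b_{τ₁}‖. -/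
open Matrix Finset

/-- The Euclidean norm of a real vector. -/
noncomputable def evNorm {n : ℕ} (v : Fin n → ℝ) : ℝ :=
  Real.sqrt (∑ i, v i ^ 2)

/-- `ε_A(Δt) = max_{t₀ ≤ τ ≤ t₀+Δt} ‖A_τ − A'_{t₀}‖` (spectral norm). -/
noncomputable def epsA {n : ℕ} (t₀ : ℕ)
    (A A' : ℕ → Matrix (Fin n) (Fin n) ℝ) (Δt : ℕ) : ℝ :=
  (Finset.Icc t₀ (t₀ + Δt)).sup'
    (Finset.nonempty_Icc.mpr (Nat.le_add_right _ _))
    (fun τ => specNorm (A τ - A' t₀))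

/-- `ε_b(Δt) = max_{t₀ ≤ τ ≤ t₀+Δt} ‖b_τ − b'_τ‖` (Euclidean norm). -/
noncomputable def epsB {n : ℕ} (t₀ : ℕ)
    (b b' : ℕ → (Fin n → ℝ)) (Δt : ℕ) : ℝ :=
  (Finset.Icc t₀ (t₀ + Δt)).sup'
    (Finset.nonempty_Icc.mpr (Nat.le_add_right _ _))
    (fun τ => evNorm (b τ - b' τ))

/-!
The deviation `e τ = b τ - b' τ` starts at `0` and satisfies
`e (τ + 1) = (A τ - A' t₀) *ᵥ b τ + A' t₀ *ᵥ e τ`, so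
`‖e (τ + 1)‖ ≤ ε_A ‖b τ‖ + ‖A' t₀‖ ‖e τ‖` as long as `τ ≤ t₀ + Δt`.
Unrolling this linear recursive inequality (a discrete Duhamel formula) gives the bound.
-/

theorem sum_Ico_succ_pow_mul {R : Type*} [CommSemiring R] (a : R) (c : ℕ → R) {t₀ τ : ℕ}
    (hτ : t₀ ≤ τ) :
    ∑ τ₁ ∈ Ico t₀ (τ + 1), a ^ (τ + 1 - 1 - τ₁) * c τ₁
      = c τ + a * ∑ τ₁ ∈ Ico t₀ τ, a ^ (τ - 1 - τ₁) * c τ₁ := by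
  rw [sum_Ico_succ_top hτ, mul_sum, add_comm, Nat.add_sub_cancel, Nat.sub_self, pow_zero,
    one_mul]
  congr 1
  refine sum_congr rfl fun τ₁ hτ₁ => ?_
  rw [show τ - τ₁ = τ - 1 - τ₁ + 1 by grind, pow_succ', mul_assoc]

theorem le_sum_pow_mul_of_succ_le_add_mul {R : Type*} [CommSemiring R] [PartialOrder R]
    [IsOrderedRing R] {e c : ℕ → R} {a : R} {t₀ T : ℕ} (ha : 0 ≤ a) (he₀ : e t₀ ≤ 0)
    (hstep : ∀ t, t₀ ≤ t → t < T → e (t + 1) ≤ c t + a * e t) :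
    ∀ τ, t₀ ≤ τ → τ ≤ T → e τ ≤ ∑ τ₁ ∈ Ico t₀ τ, a ^ (τ - 1 - τ₁) * c τ₁ := by
  intro τ hτ₀
  induction τ, hτ₀ using Nat.le_induction with
  | base => intro; simpa using he₀
  | succ τ hτ ih =>
    intro hτT
    rw [sum_Ico_succ_pow_mul a c hτ]
    calc e (τ + 1) ≤ c τ + a * e τ := hstep τ hτ hτT
      _ ≤ _ := by gcongr; exact ih (Nat.le_of_succ_le hτT)

theorem evNorm_eq_norm_toLp {n : ℕ} (v : Fin n → ℝ) : evNorm v = ‖WithLp.toLp 2 v‖ := by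
  simp [evNorm, EuclideanSpace.norm_eq, sq_abs]

theorem evNorm_nonneg {n : ℕ} (v : Fin n → ℝ) : 0 ≤ evNorm v := by
  rw [evNorm_eq_norm_toLp]; exact norm_nonneg _

theorem evNorm_add_le {n : ℕ} (u v : Fin n → ℝ) : evNorm (u + v) ≤ evNorm u + evNorm v := by
  simp only [evNorm_eq_norm_toLp, WithLp.toLp_add]
  exact norm_add_le _ _

theorem evNorm_mulVec_le {n : ℕ} (A : Matrix (Fin n) (Fin n) ℝ) (v : Fin n → ℝ) :
    evNorm (A *ᵥ v) ≤ specNorm A * evNorm v := by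
  simp only [evNorm_eq_norm_toLp, ← Matrix.toEuclideanCLM_toLp (𝕜 := ℝ)]
  exact (Matrix.toEuclideanCLM (𝕜 := ℝ) A).le_opNorm _

theorem evNorm_mulVec_sub_sub_mulVec_sub_le {n : ℕ} (M M' : Matrix (Fin n) (Fin n) ℝ)
    (u u' w : Fin n → ℝ) :
    evNorm ((M *ᵥ u - w) - (M' *ᵥ u' - w))
      ≤ specNorm (M - M') * evNorm u + specNorm M' * evNorm (u - u') := by
  have hsplit : (M *ᵥ u - w) - (M' *ᵥ u' - w) = (M - M') *ᵥ u + M' *ᵥ (u - u') := by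
    rw [sub_mulVec, mulVec_sub]; abel
  rw [hsplit]
  exact (evNorm_add_le _ _).trans (add_le_add (evNorm_mulVec_le _ _) (evNorm_mulVec_le _ _))

theorem specNorm_sub_le_epsA {n : ℕ} {t₀ Δt τ : ℕ} (A A' : ℕ → Matrix (Fin n) (Fin n) ℝ)
    (hτ : τ ∈ Icc t₀ (t₀ + Δt)) : specNorm (A τ - A' t₀) ≤ epsA t₀ A A' Δt :=
  le_sup' (fun τ => specNorm (A τ - A' t₀)) hτ

theorem lodo_deviation_pointwise_bound_general
    (n : ℕ) (t₀ : ℕ)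
    (s : ℕ → (Fin n → ℝ))
    (A A' : ℕ → Matrix (Fin n) (Fin n) ℝ) (b b' : ℕ → (Fin n → ℝ))
    (hb0 : b t₀ = 0)
    (hbrec : ∀ t, t₀ ≤ t → b (t + 1) = A t *ᵥ b t - s t)
    (hb'0 : b' t₀ = 0)
    (hb'rec : ∀ t, t₀ ≤ t → b' (t + 1) = A' t₀ *ᵥ b' t - s t) :
    ∀ Δt : ℕ, ∀ τ, t₀ ≤ τ → τ ≤ t₀ + Δt + 1 →
      evNorm (b τ - b' τ) ≤
        epsA t₀ A A' Δt *
          ∑ τ₁ ∈ Finset.Ico t₀ τ, specNorm (A' t₀) ^ (τ - 1 - τ₁) * evNorm (b τ₁) := by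
  intro Δt τ hτ₀ hτ
  have hstep : ∀ t, t₀ ≤ t → t < t₀ + Δt + 1 → evNorm (b (t + 1) - b' (t + 1))
      ≤ epsA t₀ A A' Δt * evNorm (b t) + specNorm (A' t₀) * evNorm (b t - b' t) := by
    intro t ht₀ ht
    rw [hbrec t ht₀, hb'rec t ht₀]
    refine (evNorm_mulVec_sub_sub_mulVec_sub_le _ _ _ _ _).trans ?_
    gcongr
    · exact evNorm_nonneg _
    · exact specNorm_sub_le_epsA A A' (mem_Icc.mpr ⟨ht₀, by omega⟩)
  have hdev := le_sum_pow_mul_of_succ_le_add_mul (e := fun t => evNorm (b t - b' t))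
    (a := specNorm (A' t₀)) (norm_nonneg _) (by simp [hb0, hb'0, evNorm]) hstep τ hτ₀ hτ
  simpa only [mul_sum, mul_left_comm] using hdev

/-- Pointwise forward deviation bound for the coupled dynamics. -/
theorem lodo_deviation_pointwise_bound
    (n : ℕ) (hn : 1 ≤ n) (t₀ : ℕ) (α : ℝ) (hα : 0 < α)
    (H : Matrix (Fin n) (Fin n) ℝ) (s : ℕ → (Fin n → ℝ))
    (bmax : ℝ) (hbmax : 0 < bmax)
    (A A' : ℕ → Matrix (Fin n) (Fin n) ℝ) (b b' : ℕ → (Fin n → ℝ))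
    (hb0 : b t₀ = 0)
    (hbrec : ∀ t, t₀ ≤ t → b (t + 1) = A t *ᵥ b t - s t)
    (hArec : ∀ t, t₀ ≤ t →
      A (t + 1) = A t - α • (H * vecMulVec (b (t + 1)) (b t) * H ^ 2))
    (hA'0 : A' t₀ = A t₀) (hb'0 : b' t₀ = 0)
    (hb'rec : ∀ t, t₀ ≤ t → b' (t + 1) = A' t₀ *ᵥ b' t - s t)
    (hA'rec : ∀ t, t₀ ≤ t →
      A' (t + 1) = A' t - α • (H * vecMulVec (b' (t + 1)) (b' t) * H ^ 2))
    (hAnorm : specNorm (A' t₀) < 1)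
    (hb'bound : ∀ t, t₀ ≤ t → evNorm (b' t) ≤ bmax) :
    ∀ Δt : ℕ, ∀ τ, t₀ ≤ τ → τ ≤ t₀ + Δt + 1 →
      evNorm (b τ - b' τ) ≤
        epsA t₀ A A' Δt *
          ∑ τ₁ ∈ Finset.Ico t₀ τ, specNorm (A' t₀) ^ (τ - 1 - τ₁) * evNorm (b τ₁) :=
  lodo_deviation_pointwise_bound_general n t₀ s A A' b b' hb0 hbrec hb'0 hb'rec
end

section
/- Under the coupled-dynamics setup, for every Δt ∈ ℕ satisfying Δt + 1 ≤ (4/27)(1 − ‖A'_{t₀}‖)/(α ‖H‖³ b_max²), the maximum drift of A is bounded by ε_A(Δt) ≤ (9/4) α ‖H‖³ b_max² (Δt + 1), and in particular ε_A(Δt) ≤ (1/3)(1 − ‖A'_{t₀}‖). -/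
/-!
Write `D_k = ‖A_{t₀+k} − A'_{t₀}‖`, `e_k = ‖b_{t₀+k} − b'_{t₀+k}‖`, `q = ‖A'_{t₀}‖` and
`K = α ‖H‖³`. Subtracting the two recursions gives
`b_{t+1} − b'_{t+1} = A'_{t₀} (b_t − b'_t) + (A_t − A'_{t₀}) b_t`, hence
`e_{k+1} ≤ q e_k + D_k ‖b_{t₀+k}‖`, while `D_{k+1} ≤ D_k + K ‖b_{t₀+k+1}‖ ‖b_{t₀+k}‖`.
One bootstraps the pair of bounds `D_k ≤ (9/4) K b_max² k` and `e_k ≤ b_max / 2`: the second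
gives `‖b_{t₀+k}‖ ≤ (3/2) b_max`, so each step adds at most `(9/4) K b_max²` to the drift, and as
long as the drift stays below `(1 − q)/3` the error stays below
`q b_max / 2 + (1 − q)/3 · (3/2) b_max = b_max / 2`.
-/

open Matrix Finset

theorem epsA_le {n t₀ Δt : ℕ} {A A' : ℕ → Matrix (Fin n) (Fin n) ℝ} {c : ℝ}
    (h : ∀ k ≤ Δt, specNorm (A (t₀ + k) - A' t₀) ≤ c) : epsA t₀ A A' Δt ≤ c :=
  Finset.sup'_le _ _ fun τ hτ => by
    obtain ⟨hτ₀, hτΔ⟩ := Finset.mem_Icc.mp hτ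
    obtain ⟨k, rfl⟩ := Nat.exists_eq_add_of_le hτ₀
    exact h k (by omega)

section L2OperatorNorm

open scoped Matrix.Norms.L2Operator

theorem Matrix.l2_opNorm_vecMulVec {𝕜 m n : Type*} [RCLike 𝕜] [Fintype m] [Fintype n]
    [DecidableEq n] (x : EuclideanSpace 𝕜 m) (y : EuclideanSpace 𝕜 n) :
    ‖vecMulVec x.ofLp (star y.ofLp)‖ = ‖x‖ * ‖y‖ := by
  rw [← InnerProductSpace.symm_toEuclideanLin_rankOne, l2_opNorm_def, LinearEquiv.trans_apply,
    LinearEquiv.apply_symm_apply]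
  exact InnerProductSpace.norm_rankOne x y

variable {m : Type*} [Fintype m] [DecidableEq m]

theorem norm_sub_mulVec_sub_le (A A₀ : Matrix m m ℝ) (u u' w : m → ℝ) :
    ‖WithLp.toLp 2 ((A *ᵥ u - w) - (A₀ *ᵥ u' - w))‖
      ≤ ‖A₀‖ * ‖WithLp.toLp 2 (u - u')‖ + ‖A - A₀‖ * ‖WithLp.toLp 2 u‖ := by
  have hsplit : (A *ᵥ u - w) - (A₀ *ᵥ u' - w) = A₀ *ᵥ (u - u') + (A - A₀) *ᵥ u := by
    rw [mulVec_sub, sub_mulVec]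
    abel
  rw [hsplit, WithLp.toLp_add]
  exact (norm_add_le _ _).trans <| add_le_add
    (A₀.l2_opNorm_mulVec (WithLp.toLp 2 _)) ((A - A₀).l2_opNorm_mulVec (WithLp.toLp 2 _))

theorem norm_sub_rankOneUpdate_sub_le (A A₀ H : Matrix m m ℝ) {α : ℝ} (hα : 0 ≤ α)
    (u v : m → ℝ) :
    ‖(A - α • (H * vecMulVec u v * H ^ 2)) - A₀‖
      ≤ ‖A - A₀‖ + α * ‖H‖ ^ 3 * ‖WithLp.toLp 2 u‖ * ‖WithLp.toLp 2 v‖ := by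
  have hupdate : ‖H * vecMulVec u v * H ^ 2‖ ≤ ‖H‖ ^ 3 * ‖vecMulVec u v‖ :=
    calc ‖H * vecMulVec u v * H ^ 2‖ ≤ ‖H‖ * ‖vecMulVec u v‖ * ‖H‖ ^ 2 := by
          refine (norm_mul_le _ _).trans ?_
          gcongr
          exacts [norm_mul_le _ _, norm_pow_le' _ two_pos]
      _ = ‖H‖ ^ 3 * ‖vecMulVec u v‖ := by ring
  calc ‖(A - α • (H * vecMulVec u v * H ^ 2)) - A₀‖
      = ‖(A - A₀) - α • (H * vecMulVec u v * H ^ 2)‖ := by rw [sub_right_comm]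
    _ ≤ ‖A - A₀‖ + α * ‖H * vecMulVec u v * H ^ 2‖ :=
          (norm_sub_le _ _).trans_eq (by rw [norm_smul, Real.norm_of_nonneg hα])
    _ ≤ ‖A - A₀‖ + α * (‖H‖ ^ 3 * ‖vecMulVec u v‖) := by gcongr
    _ = ‖A - A₀‖ + α * ‖H‖ ^ 3 * ‖WithLp.toLp 2 u‖ * ‖WithLp.toLp 2 v‖ := by
          have hrankOne := l2_opNorm_vecMulVec (WithLp.toLp 2 u) (WithLp.toLp 2 v)
          simp only [star_trivial] at hrankOne
          rw [hrankOne]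
          ring

end L2OperatorNorm

theorem drift_bootstrap {q β K : ℝ} {N : ℕ} {D e r : ℕ → ℝ}
    (hq : 0 ≤ q) (hβ : 0 ≤ β) (hK : 0 ≤ K)
    (hN : 9 / 4 * K * β ^ 2 * (N + 1) ≤ 1 / 3 * (1 - q))
    (hD0 : D 0 = 0) (he0 : e 0 = 0) (hr0 : ∀ k, 0 ≤ r k) (hr : ∀ k, r k ≤ e k + β)
    (he : ∀ k, e (k + 1) ≤ q * e k + D k * r k)
    (hD : ∀ k, D (k + 1) ≤ D k + K * r (k + 1) * r k) :
    ∀ k ≤ N, D k ≤ 9 / 4 * K * β ^ 2 * k ∧ e k ≤ β / 2 := by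
  intro k hk
  induction k with
  | zero => exact ⟨by simp [hD0], by linarith⟩
  | succ k ih =>
    obtain ⟨hDk, hek⟩ := ih (by omega)
    have hkN : (k : ℝ) ≤ N + 1 := by exact_mod_cast (by omega : k ≤ N + 1)
    have hDk' : D k ≤ 1 / 3 * (1 - q) :=
      hDk.trans ((mul_le_mul_of_nonneg_left hkN (by positivity)).trans hN)
    have hrk : r k ≤ 3 / 2 * β := by linarith [hr k]
    have hgap : 0 ≤ 1 / 3 * (1 - q) := le_trans (by positivity) hN
    have hek1 : e (k + 1) ≤ β / 2 :=
      calc e (k + 1) ≤ q * e k + D k * r k := he k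
        _ ≤ q * (β / 2) + 1 / 3 * (1 - q) * (3 / 2 * β) :=
          add_le_add (mul_le_mul_of_nonneg_left hek hq) (mul_le_mul hDk' hrk (hr0 k) hgap)
        _ = β / 2 := by ring
    have hrk1 : r (k + 1) ≤ 3 / 2 * β := by linarith [hr (k + 1)]
    refine ⟨?_, hek1⟩
    calc D (k + 1) ≤ D k + K * r (k + 1) * r k := hD k
      _ ≤ 9 / 4 * K * β ^ 2 * k + K * (3 / 2 * β) * (3 / 2 * β) := by
          gcongr
          exact hr0 k
      _ = 9 / 4 * K * β ^ 2 * ((k + 1 : ℕ) : ℝ) := by push_cast; ring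

theorem lodo_drift_bound_general
    (n : ℕ) (t₀ : ℕ) (α : ℝ) (hα : 0 < α)
    (H : Matrix (Fin n) (Fin n) ℝ) (s : ℕ → (Fin n → ℝ))
    (bmax : ℝ) (hbmax : 0 < bmax)
    (A A' : ℕ → Matrix (Fin n) (Fin n) ℝ) (b b' : ℕ → (Fin n → ℝ))
    (hb0 : b t₀ = 0)
    (hbrec : ∀ t, t₀ ≤ t → b (t + 1) = A t *ᵥ b t - s t)
    (hArec : ∀ t, t₀ ≤ t →
      A (t + 1) = A t - α • (H * vecMulVec (b (t + 1)) (b t) * H ^ 2))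
    (hA'0 : A' t₀ = A t₀) (hb'0 : b' t₀ = 0)
    (hb'rec : ∀ t, t₀ ≤ t → b' (t + 1) = A' t₀ *ᵥ b' t - s t)
    (hAnorm : specNorm (A' t₀) < 1)
    (hb'bound : ∀ t, t₀ ≤ t → evNorm (b' t) ≤ bmax) :
    ∀ Δt : ℕ,
      (Δt + 1 : ℝ) ≤ 4 / 27 * (1 - specNorm (A' t₀)) / (α * specNorm H ^ 3 * bmax ^ 2) →
      epsA t₀ A A' Δt ≤ 9 / 4 * α * specNorm H ^ 3 * bmax ^ 2 * (Δt + 1) ∧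
      epsA t₀ A A' Δt ≤ 1 / 3 * (1 - specNorm (A' t₀)) := by
  intro Δt hΔt
  have hK : 0 ≤ α * specNorm H ^ 3 := mul_nonneg hα.le (pow_nonneg (norm_nonneg _) 3)
  have hN : 9 / 4 * (α * specNorm H ^ 3) * bmax ^ 2 * (Δt + 1)
      ≤ 1 / 3 * (1 - specNorm (A' t₀)) := by
    linear_combination 9 / 4 * mul_le_of_le_div₀ (by linarith) (mul_nonneg hK (sq_nonneg _)) hΔt
  have hsteps := drift_bootstrap (N := Δt) (D := fun k => specNorm (A (t₀ + k) - A' t₀))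
    (e := fun k => ‖WithLp.toLp 2 (b (t₀ + k) - b' (t₀ + k))‖)
    (r := fun k => ‖WithLp.toLp 2 (b (t₀ + k))‖)
    (norm_nonneg _) hbmax.le hK hN (by simp [hA'0, specNorm]) (by simp [hb0, hb'0])
    (fun _ => norm_nonneg _)
    (fun k => by
      simp only [WithLp.toLp_sub]
      linarith [norm_le_insert' (WithLp.toLp 2 (b (t₀ + k))) (WithLp.toLp 2 (b' (t₀ + k))),
        (evNorm_eq_norm_toLp _).symm.trans_le (hb'bound (t₀ + k) (by omega))])
    (fun k => by
      simp only [← add_assoc, hbrec _ (by omega : t₀ ≤ t₀ + k), hb'rec _ (by omega : t₀ ≤ t₀ + k)]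
      exact norm_sub_mulVec_sub_le _ _ _ _ _)
    (fun k => by
      simp only [← add_assoc, hArec _ (by omega : t₀ ≤ t₀ + k)]
      exact norm_sub_rankOneUpdate_sub_le _ _ _ hα.le _ _)
  have hdrift : epsA t₀ A A' Δt ≤ 9 / 4 * α * specNorm H ^ 3 * bmax ^ 2 * (Δt + 1) :=
    epsA_le fun k hk => by
      have hk' : (k : ℝ) ≤ Δt + 1 := by exact_mod_cast (by omega : k ≤ Δt + 1)
      calc specNorm (A (t₀ + k) - A' t₀) ≤ 9 / 4 * (α * specNorm H ^ 3) * bmax ^ 2 * k :=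
            (hsteps k hk).1
        _ ≤ 9 / 4 * (α * specNorm H ^ 3) * bmax ^ 2 * (Δt + 1) := by gcongr
        _ = 9 / 4 * α * specNorm H ^ 3 * bmax ^ 2 * (Δt + 1) := by ring
  exact ⟨hdrift, hdrift.trans (by linarith)⟩

/-- Drift bound: for short enough time horizons the maximum drift of
`A` is at most `(9/4) α ‖H‖³ b_max² (Δt+1)`, and in particular at most
`(1/3)(1 − ‖A'_{t₀}‖)`. -/
theorem lodo_drift_bound
    (n : ℕ) (hn : 1 ≤ n) (t₀ : ℕ) (α : ℝ) (hα : 0 < α)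
    (H : Matrix (Fin n) (Fin n) ℝ) (s : ℕ → (Fin n → ℝ))
    (bmax : ℝ) (hbmax : 0 < bmax)
    (A A' : ℕ → Matrix (Fin n) (Fin n) ℝ) (b b' : ℕ → (Fin n → ℝ))
    (hb0 : b t₀ = 0)
    (hbrec : ∀ t, t₀ ≤ t → b (t + 1) = A t *ᵥ b t - s t)
    (hArec : ∀ t, t₀ ≤ t →
      A (t + 1) = A t - α • (H * vecMulVec (b (t + 1)) (b t) * H ^ 2))
    (hA'0 : A' t₀ = A t₀) (hb'0 : b' t₀ = 0)
    (hb'rec : ∀ t, t₀ ≤ t → b' (t + 1) = A' t₀ *ᵥ b' t - s t)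
    (hA'rec : ∀ t, t₀ ≤ t →
      A' (t + 1) = A' t - α • (H * vecMulVec (b' (t + 1)) (b' t) * H ^ 2))
    (hAnorm : specNorm (A' t₀) < 1)
    (hb'bound : ∀ t, t₀ ≤ t → evNorm (b' t) ≤ bmax) :
    ∀ Δt : ℕ,
      (Δt + 1 : ℝ) ≤ 4 / 27 * (1 - specNorm (A' t₀)) / (α * specNorm H ^ 3 * bmax ^ 2) →
      epsA t₀ A A' Δt ≤ 9 / 4 * α * specNorm H ^ 3 * bmax ^ 2 * (Δt + 1) ∧
      epsA t₀ A A' Δt ≤ 1 / 3 * (1 - specNorm (A' t₀)) :=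
  lodo_drift_bound_general n t₀ α hα H s bmax hbmax A A' b b' hb0 hbrec hArec hA'0 hb'0 hb'rec
    hAnorm hb'bound
end

section
/- Under the coupled-dynamics setup, let R > 0 satisfy R ≤ (4/27)(1 − ‖A'_{t₀}‖)/(‖H‖³ b_max²) − α. Then for every Δt ∈ ℕ with 0 ≤ Δt ≤ R/α, the approximation error of the exact matrix trajectory by the approximate one is quadratic in time: ‖A_{t₀+Δt} − A'_{t₀+Δt}‖ ≤ ‖H‖³ b_max² · (α² Δt² / (2R)) · (2 + α Δt / (2R)). -/
open Matrix Finset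

/-!
While the drift `‖A_t - A'_{t₀}‖` stays below `(1 - ‖A'_{t₀}‖) / 3`, the exact matrices are
contractions with a margin, so the vector error `b_t - b'_t` is driven only by the drift; the drift
in turn grows by at most `α ‖H‖³ (3/2 b_max)²` per step as long as `‖b_t - b'_t‖ ≤ b_max / 2`.
A joint induction shows that both errors grow linearly in `t - t₀`, and the step-size condition on
`R` keeps the drift under the threshold up to time `t₀ + R / α`. The matrix error `A_t - A'_t` is a
sum of rank-one increments `α H (b_{τ+1} b_τᵀ - b'_{τ+1} b'_τᵀ) H²`, each of size linear in
`τ - t₀`, hence it grows quadratically.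
-/

open scoped Matrix.Norms.L2Operator
open WithLp

theorem specNorm_eq_norm {n : ℕ} (A : Matrix (Fin n) (Fin n) ℝ) : specNorm A = ‖A‖ := rfl

theorem evNorm_eq_norm {n : ℕ} (v : Fin n → ℝ) : evNorm v = ‖toLp 2 v‖ := by
  simp [evNorm, EuclideanSpace.norm_eq]

section L2OpNorm

variable {𝕜 m n : Type*} [RCLike 𝕜] [Fintype m] [Fintype n] [DecidableEq n]

theorem Matrix.l2_opNorm_vecMulVec_s12 (x : m → 𝕜) (y : n → 𝕜) :
    ‖vecMulVec x y‖ = ‖toLp 2 x‖ * ‖toLp 2 y‖ := by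
  have h := InnerProductSpace.symm_toEuclideanLin_rankOne (toLp 2 x) (toLp 2 (star y))
  rw [ofLp_toLp, ofLp_toLp, star_star] at h
  rw [l2_opNorm_def, ← h, LinearEquiv.trans_apply, LinearEquiv.apply_symm_apply]
  refine (InnerProductSpace.norm_rankOne _ _).trans ?_
  simp [EuclideanSpace.norm_eq]

theorem Matrix.norm_toLp_mulVec_le (A : Matrix m n 𝕜) (x : n → 𝕜) :
    ‖toLp 2 (A *ᵥ x)‖ ≤ ‖A‖ * ‖toLp 2 x‖ :=
  A.l2_opNorm_mulVec (toLp 2 x)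

theorem Matrix.norm_toLp_mulVec_sub_mulVec_le (A A₀ : Matrix m n 𝕜) (x x' : n → 𝕜) :
    ‖toLp 2 (A *ᵥ x - A₀ *ᵥ x')‖ ≤
      (‖A₀‖ + ‖A - A₀‖) * ‖toLp 2 (x - x')‖ + ‖A - A₀‖ * ‖toLp 2 x'‖ := by
  have hsplit : A *ᵥ x - A₀ *ᵥ x' = A *ᵥ (x - x') + (A - A₀) *ᵥ x' := by
    rw [mulVec_sub, sub_mulVec]; abel
  rw [hsplit, toLp_add]
  refine (norm_add_le _ _).trans (add_le_add ?_ (norm_toLp_mulVec_le _ _))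
  refine (norm_toLp_mulVec_le _ _).trans ?_
  gcongr
  exact norm_le_norm_add_norm_sub' A A₀

end L2OpNorm

theorem norm_smul_mul_mul_sq_le {R : Type*} [SeminormedRing R] [NormedSpace ℝ R] {α : ℝ}
    (hα : 0 ≤ α) (h x : R) : ‖α • (h * x * h ^ 2)‖ ≤ α * ‖h‖ ^ 3 * ‖x‖ := calc
  ‖α • (h * x * h ^ 2)‖ ≤ α * (‖h‖ * ‖x‖ * ‖h‖ ^ 2) := by
    rw [norm_smul, Real.norm_of_nonneg hα]
    gcongr
    exact norm_mul₃_le.trans (by gcongr; exact norm_pow_le' h two_pos)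
  _ = α * ‖h‖ ^ 3 * ‖x‖ := by ring

theorem norm_le_add_norm_sub_of_norm_le {E : Type*} [SeminormedAddGroup E] {u u' : E} {β : ℝ}
    (hu' : ‖u'‖ ≤ β) : ‖u‖ ≤ β + ‖u - u'‖ := by
  linarith [norm_le_norm_add_norm_sub' u u']

section GradientStep

variable {ι : Type*} [Fintype ι] [DecidableEq ι] {α β : ℝ} {H : Matrix ι ι ℝ}

theorem norm_sub_le_of_affine_step {A A₀ : Matrix ι ι ℝ} {s x₀ x₁ x₀' x₁' : ι → ℝ}
    (h : x₁ = A *ᵥ x₀ - s) (h' : x₁' = A₀ *ᵥ x₀' - s) (hx₀' : ‖toLp 2 x₀'‖ ≤ β) :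
    ‖toLp 2 (x₁ - x₁')‖ ≤ (‖A₀‖ + ‖A - A₀‖) * ‖toLp 2 (x₀ - x₀')‖ + ‖A - A₀‖ * β := by
  rw [h, h', sub_sub_sub_cancel_right]
  exact (norm_toLp_mulVec_sub_mulVec_le A A₀ x₀ x₀').trans (by gcongr)

theorem norm_sub_le_of_gradient_step {A A₀ A₁ : Matrix ι ι ℝ} {u v u' v' : ι → ℝ}
    (hα : 0 ≤ α) (h : A₁ = A - α • (H * vecMulVec u v * H ^ 2))
    (hu' : ‖toLp 2 u'‖ ≤ β) (hv' : ‖toLp 2 v'‖ ≤ β) :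
    ‖A₁ - A₀‖ ≤
      ‖A - A₀‖ + α * ‖H‖ ^ 3 * ((β + ‖toLp 2 (u - u')‖) * (β + ‖toLp 2 (v - v')‖)) := by
  rw [h, sub_right_comm]
  refine (norm_sub_le _ _).trans (add_le_add_right ?_ _)
  refine (norm_smul_mul_mul_sq_le hα H _).trans ?_
  have hu := norm_le_add_norm_sub_of_norm_le (u := toLp 2 u) hu'
  rw [l2_opNorm_vecMulVec_s12]
  exact mul_le_mul_of_nonneg_left (mul_le_mul hu (norm_le_add_norm_sub_of_norm_le hv')
    (norm_nonneg _) ((norm_nonneg _).trans hu)) (by positivity)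

theorem norm_sub_le_of_gradient_steps {A A' A₁ A₁' : Matrix ι ι ℝ} {u v u' v' : ι → ℝ}
    (hα : 0 ≤ α) (h : A₁ = A - α • (H * vecMulVec u v * H ^ 2))
    (h' : A₁' = A' - α • (H * vecMulVec u' v' * H ^ 2))
    (hu' : ‖toLp 2 u'‖ ≤ β) (hv' : ‖toLp 2 v'‖ ≤ β) :
    ‖A₁ - A₁'‖ ≤ ‖A - A'‖ + α * ‖H‖ ^ 3 *
      (‖toLp 2 (u - u')‖ * (β + ‖toLp 2 (v - v')‖) + β * ‖toLp 2 (v - v')‖) := by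
  have hsplit : A₁ - A₁' = (A - A') -
      α • (H * (vecMulVec (u - u') v + vecMulVec u' (v - v')) * H ^ 2) := by
    rw [h, h', sub_vecMulVec, vecMulVec_sub]
    simp only [Matrix.mul_sub, Matrix.sub_mul, Matrix.mul_add, Matrix.add_mul, smul_sub, smul_add]
    abel
  rw [hsplit]
  refine (norm_sub_le _ _).trans (add_le_add_right ?_ _)
  refine (norm_smul_mul_mul_sq_le hα H _).trans ?_
  gcongr
  refine (norm_add_le _ _).trans ?_
  rw [l2_opNorm_vecMulVec_s12, l2_opNorm_vecMulVec_s12]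
  gcongr
  exact norm_le_add_norm_sub_of_norm_le hv'

end GradientStep

theorem coupled_errors_le_linear {a β κ : ℝ} {N : ℕ} {x y : ℕ → ℝ}
    (ha : 0 ≤ a) (ha₁ : a < 1) (hβ : 0 ≤ β) (hκ : 0 ≤ κ)
    (hN : 27 / 4 * κ * β ^ 2 * N ≤ 1 - a) (hx₀ : x 0 = 0) (hy₀ : y 0 = 0)
    (hy_nonneg : ∀ k, 0 ≤ y k)
    (hy_step : ∀ k < N, y (k + 1) ≤ (a + x k) * y k + x k * β)
    (hx_step : ∀ k < N, x (k + 1) ≤ x k + κ * ((β + y (k + 1)) * (β + y k))) :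
    ∀ k ≤ N, x k ≤ 9 / 4 * κ * β ^ 2 * k ∧ y k ≤ 27 / 8 * κ * β ^ 3 / (1 - a) * k := by
  intro k hk
  induction k with
  | zero => simp [hx₀, hy₀]
  | succ k ih =>
    obtain ⟨hxk, hyk⟩ := ih (by omega)
    have hkN : (k : ℝ) ≤ N := by exact_mod_cast (by omega : k ≤ N)
    have hρ : 0 < 1 - a := by linarith
    generalize hX : 9 / 4 * κ * β ^ 2 * (k : ℝ) = X at hxk
    generalize hY : 27 / 8 * κ * β ^ 3 / (1 - a) * (k : ℝ) = Y at hyk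
    have hX₀ : 0 ≤ X := by rw [← hX]; positivity
    have hX_le : X ≤ (1 - a) / 3 := by
      rw [← hX]; nlinarith [mul_le_mul_of_nonneg_left hkN (by positivity : 0 ≤ κ * β ^ 2)]
    -- The constant `27/8` is chosen so that `X * β` is exactly the share `2/3 (1 - a)` of `Y`:
    -- together with `a + X ≤ a + (1 - a)/3` this closes the `y`-step with no loss.
    have hXY : X * β = 2 / 3 * (1 - a) * Y := by
      rw [← hX, ← hY]; field_simp; ring
    have hY_le : Y ≤ β / 2 := by nlinarith
    have hy_succ : y (k + 1) ≤ Y := calc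
      y (k + 1) ≤ (a + x k) * y k + x k * β := hy_step k (by omega)
      _ ≤ (a + X) * Y + X * β := by gcongr; linarith [hy_nonneg k]
      _ ≤ (a + (1 - a) / 3) * Y + 2 / 3 * (1 - a) * Y := by
        rw [hXY]; gcongr; linarith [hy_nonneg k]
      _ = Y := by ring
    constructor
    · calc x (k + 1) ≤ x k + κ * ((β + y (k + 1)) * (β + y k)) := hx_step k (by omega)
        _ ≤ X + κ * ((β + β / 2) * (β + β / 2)) := by
          have := hy_nonneg (k + 1)
          have := hy_nonneg k
          gcongr <;> linarith
        _ = 9 / 4 * κ * β ^ 2 * ↑(k + 1) := by rw [← hX]; push_cast; ring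
    · calc y (k + 1) ≤ Y := hy_succ
        _ ≤ 27 / 8 * κ * β ^ 3 / (1 - a) * ↑(k + 1) := by
          rw [← hY]; gcongr; linarith

theorem error_le_quadratic {β κ γ : ℝ} {N : ℕ} {y d : ℕ → ℝ}
    (hβ : 0 ≤ β) (hκ : 0 ≤ κ) (hγ : 0 ≤ γ) (hγN : γ * N ≤ β / 2) (hd₀ : d 0 = 0)
    (hy_nonneg : ∀ k, 0 ≤ y k) (hy : ∀ k ≤ N, y k ≤ γ * k)
    (hd_step : ∀ k < N, d (k + 1) ≤ d k + κ * (y (k + 1) * (β + y k) + β * y k)) :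
    ∀ k ≤ N, d k ≤ 3 / 2 * κ * β * γ * k ^ 2 := by
  intro k hk
  induction k with
  | zero => simp [hd₀]
  | succ k ih =>
    have hkN : (k : ℝ) + 1 ≤ N := by exact_mod_cast hk
    have hyk : y k ≤ γ * k := hy k (by omega)
    have hyk' : y (k + 1) ≤ γ * (k + 1) := by exact_mod_cast hy (k + 1) hk
    have hyβ : y k ≤ β / 2 := by nlinarith
    calc d (k + 1) ≤ d k + κ * (y (k + 1) * (β + y k) + β * y k) := hd_step k (by omega)
      _ ≤ 3 / 2 * κ * β * γ * k ^ 2 + κ * (γ * (k + 1) * (β + β / 2) + β * (γ * k)) := by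
        have := hy_nonneg k
        gcongr
        exact ih (by omega)
      _ ≤ 3 / 2 * κ * β * γ * ↑(k + 1) ^ 2 := by
        push_cast; nlinarith [mul_nonneg (mul_nonneg hκ hβ) hγ]

theorem coupled_errors_le_quadratic {a β κ : ℝ} {N : ℕ} {x y d : ℕ → ℝ}
    (ha : 0 ≤ a) (ha₁ : a < 1) (hβ : 0 ≤ β) (hκ : 0 ≤ κ)
    (hN : 27 / 4 * κ * β ^ 2 * N ≤ 1 - a) (hx₀ : x 0 = 0) (hy₀ : y 0 = 0) (hd₀ : d 0 = 0)
    (hy_nonneg : ∀ k, 0 ≤ y k)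
    (hy_step : ∀ k < N, y (k + 1) ≤ (a + x k) * y k + x k * β)
    (hx_step : ∀ k < N, x (k + 1) ≤ x k + κ * ((β + y (k + 1)) * (β + y k)))
    (hd_step : ∀ k < N, d (k + 1) ≤ d k + κ * (y (k + 1) * (β + y k) + β * y k)) :
    ∀ k ≤ N, d k ≤ 81 / 16 * κ ^ 2 * β ^ 4 / (1 - a) * k ^ 2 := by
  have hρ : 0 < 1 - a := by linarith
  have hlin := coupled_errors_le_linear ha ha₁ hβ hκ hN hx₀ hy₀ hy_nonneg hy_step hx_step
  have hγN : 27 / 8 * κ * β ^ 3 / (1 - a) * N ≤ β / 2 := by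
    rw [div_mul_eq_mul_div, div_le_iff₀ hρ]; nlinarith
  intro k hk
  calc d k ≤ 3 / 2 * κ * β * (27 / 8 * κ * β ^ 3 / (1 - a)) * k ^ 2 :=
        error_le_quadratic hβ hκ (by positivity) hγN hd₀ hy_nonneg (fun k hk ↦ (hlin k hk).2)
          hd_step k hk
    _ = 81 / 16 * κ ^ 2 * β ^ 4 / (1 - a) * k ^ 2 := by ring

theorem lt_one_and_mul_le_of_le_div_sub {a C R α : ℝ} (hR : 0 < R) (hα : 0 < α) (hC : 0 ≤ C)
    (h : R ≤ 4 / 27 * (1 - a) / C - α) : a < 1 ∧ 27 / 4 * C * R ≤ 1 - a := by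
  rcases hC.eq_or_lt with rfl | hC
  · rw [div_zero] at h; linarith
  · have := (le_div_iff₀ hC).mp (show R + α ≤ 4 / 27 * (1 - a) / C by linarith)
    constructor <;> nlinarith

theorem quadratic_bound_le_of_step_size {a C R α Δ : ℝ} (hR : 0 < R) (hα : 0 ≤ α) (hΔ : 0 ≤ Δ)
    (hC : 0 ≤ C) (ha : a < 1) (hCR : 27 / 4 * C * R ≤ 1 - a) :
    81 / 16 * C ^ 2 * α ^ 2 / (1 - a) * Δ ^ 2 ≤
      C * (α ^ 2 * Δ ^ 2 / (2 * R)) * (2 + α * Δ / (2 * R)) := by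
  have hρ : C / (1 - a) ≤ 4 / 27 / R := by
    rw [div_le_div_iff₀ (by linarith) hR]; nlinarith
  have hE : 0 ≤ C * (α ^ 2 * Δ ^ 2 / (2 * R)) := by positivity
  calc 81 / 16 * C ^ 2 * α ^ 2 / (1 - a) * Δ ^ 2
      = 81 / 16 * C * (C / (1 - a)) * α ^ 2 * Δ ^ 2 := by ring
    _ ≤ 81 / 16 * C * (4 / 27 / R) * α ^ 2 * Δ ^ 2 := by gcongr
    _ = 3 / 2 * (C * (α ^ 2 * Δ ^ 2 / (2 * R))) := by field_simp; ring
    _ ≤ C * (α ^ 2 * Δ ^ 2 / (2 * R)) * (2 + α * Δ / (2 * R)) := by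
      nlinarith [mul_nonneg hE (by positivity : 0 ≤ α * Δ / (2 * R))]

theorem lodo_matrix_trajectory_error_bound_general
    (n : ℕ) (t₀ : ℕ) (α : ℝ) (hα : 0 < α)
    (H : Matrix (Fin n) (Fin n) ℝ) (s : ℕ → (Fin n → ℝ))
    (bmax : ℝ)
    (A A' : ℕ → Matrix (Fin n) (Fin n) ℝ) (b b' : ℕ → (Fin n → ℝ))
    (hb0 : b t₀ = 0)
    (hbrec : ∀ t, t₀ ≤ t → b (t + 1) = A t *ᵥ b t - s t)
    (hArec : ∀ t, t₀ ≤ t →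
      A (t + 1) = A t - α • (H * vecMulVec (b (t + 1)) (b t) * H ^ 2))
    (hA'0 : A' t₀ = A t₀) (hb'0 : b' t₀ = 0)
    (hb'rec : ∀ t, t₀ ≤ t → b' (t + 1) = A' t₀ *ᵥ b' t - s t)
    (hA'rec : ∀ t, t₀ ≤ t →
      A' (t + 1) = A' t - α • (H * vecMulVec (b' (t + 1)) (b' t) * H ^ 2))
    (hb'bound : ∀ t, t₀ ≤ t → evNorm (b' t) ≤ bmax) :
    ∀ R : ℝ, 0 < R →
      R ≤ 4 / 27 * (1 - specNorm (A' t₀)) / (specNorm H ^ 3 * bmax ^ 2) - α →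
      ∀ Δt : ℕ, (Δt : ℝ) ≤ R / α →
        specNorm (A (t₀ + Δt) - A' (t₀ + Δt)) ≤
          specNorm H ^ 3 * bmax ^ 2 * (α ^ 2 * Δt ^ 2 / (2 * R)) *
            (2 + α * Δt / (2 * R)) := by
  intro R hR hRle Δt hΔt
  simp only [specNorm_eq_norm] at hRle ⊢
  simp only [evNorm_eq_norm] at hb'bound
  have hβ : 0 ≤ bmax := (norm_nonneg _).trans (hb'bound t₀ le_rfl)
  obtain ⟨ha, hCR⟩ := lt_one_and_mul_le_of_le_div_sub hR hα (by positivity) hRle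
  have hΔ : α * Δt ≤ R := by rwa [le_div_iff₀ hα, mul_comm] at hΔt
  have hN : 27 / 4 * (α * ‖H‖ ^ 3) * bmax ^ 2 * Δt ≤ 1 - ‖A' t₀‖ := by
    nlinarith [mul_le_mul_of_nonneg_left hΔ (by positivity : 0 ≤ ‖H‖ ^ 3 * bmax ^ 2)]
  have ht : ∀ k, t₀ ≤ t₀ + k := Nat.le_add_right t₀
  have hb' : ∀ k, ‖toLp 2 (b' (t₀ + k))‖ ≤ bmax := fun k ↦ hb'bound _ (ht k)
  have herr := coupled_errors_le_quadratic (N := Δt) (x := fun k ↦ ‖A (t₀ + k) - A' t₀‖)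
    (y := fun k ↦ ‖toLp 2 (b (t₀ + k) - b' (t₀ + k))‖)
    (d := fun k ↦ ‖A (t₀ + k) - A' (t₀ + k)‖) (norm_nonneg _) ha hβ (by positivity)
    hN (by simp [hA'0]) (by simp [hb0, hb'0]) (by simp [hA'0]) (fun _ ↦ norm_nonneg _)
    (fun k _ ↦ norm_sub_le_of_affine_step (hbrec _ (ht k)) (hb'rec _ (ht k)) (hb' k))
    (fun k _ ↦ norm_sub_le_of_gradient_step hα.le (hArec _ (ht k)) (hb' (k + 1)) (hb' k))
    (fun k _ ↦ norm_sub_le_of_gradient_steps hα.le (hArec _ (ht k)) (hA'rec _ (ht k))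
      (hb' (k + 1)) (hb' k))
  calc ‖A (t₀ + Δt) - A' (t₀ + Δt)‖
      ≤ 81 / 16 * (α * ‖H‖ ^ 3) ^ 2 * bmax ^ 4 / (1 - ‖A' t₀‖) * Δt ^ 2 := herr Δt le_rfl
    _ = 81 / 16 * (‖H‖ ^ 3 * bmax ^ 2) ^ 2 * α ^ 2 / (1 - ‖A' t₀‖) * Δt ^ 2 := by ring
    _ ≤ _ := quadratic_bound_le_of_step_size hR hα.le (Nat.cast_nonneg _) (by positivity) ha hCR

/-- Quadratic-in-time bound on the approximation error of the matrix
trajectory. -/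
theorem lodo_matrix_trajectory_error_bound
    (n : ℕ) (hn : 1 ≤ n) (t₀ : ℕ) (α : ℝ) (hα : 0 < α)
    (H : Matrix (Fin n) (Fin n) ℝ) (s : ℕ → (Fin n → ℝ))
    (bmax : ℝ) (hbmax : 0 < bmax)
    (A A' : ℕ → Matrix (Fin n) (Fin n) ℝ) (b b' : ℕ → (Fin n → ℝ))
    (hb0 : b t₀ = 0)
    (hbrec : ∀ t, t₀ ≤ t → b (t + 1) = A t *ᵥ b t - s t)
    (hArec : ∀ t, t₀ ≤ t →
      A (t + 1) = A t - α • (H * vecMulVec (b (t + 1)) (b t) * H ^ 2))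
    (hA'0 : A' t₀ = A t₀) (hb'0 : b' t₀ = 0)
    (hb'rec : ∀ t, t₀ ≤ t → b' (t + 1) = A' t₀ *ᵥ b' t - s t)
    (hA'rec : ∀ t, t₀ ≤ t →
      A' (t + 1) = A' t - α • (H * vecMulVec (b' (t + 1)) (b' t) * H ^ 2))
    (hAnorm : specNorm (A' t₀) < 1)
    (hb'bound : ∀ t, t₀ ≤ t → evNorm (b' t) ≤ bmax) :
    ∀ R : ℝ, 0 < R →
      R ≤ 4 / 27 * (1 - specNorm (A' t₀)) / (specNorm H ^ 3 * bmax ^ 2) - α →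
      ∀ Δt : ℕ, (Δt : ℝ) ≤ R / α →
        specNorm (A (t₀ + Δt) - A' (t₀ + Δt)) ≤
          specNorm H ^ 3 * bmax ^ 2 * (α ^ 2 * Δt ^ 2 / (2 * R)) *
            (2 + α * Δt / (2 * R)) :=
  lodo_matrix_trajectory_error_bound_general n t₀ α hα H s bmax A A' b b' hb0 hbrec hArec hA'0 hb'0
    hb'rec hA'rec hb'bound
end
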